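/- arXiv:2105.08832 — 7 statements merged into one kernel-verified Lean document; each statement's English description precedes it below -/
import Mathlib

section
/- Suppose g : E → ℝ → E satisfies the one-sided Lipschitz condition with rate γ̄ : ℝ → ℝ (with respect to ‖·‖_P) on [t₀, ∞), where γ̄ is integrable on compact subintervals of [t₀, ∞). Let x, y : ℝ → E be differentiable curves with x'(t) = g (x t) t and y'(t) = g (y t) t for all t ≥ t₀. Then for every t ≥ t₀, ‖x t − y t‖_P ≤ Real.exp (−∫ s in t₀..t, γ̄ s) · ‖x t₀ − y t₀‖_P. -/
open MeasureTheory

/-- Weighted inner product `⟪u, P.mulVec v⟫` on Euclidean space. -/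
noncomputable def wip {n : ℕ} (P : Matrix (Fin n) (Fin n) ℝ)
    (u v : EuclideanSpace ℝ (Fin n)) : ℝ :=
  ∑ i, u i * P.mulVec (fun j => v j) i

/-- Weighted norm `‖u‖_P = √⟪u, u⟫_P`. -/
noncomputable def wnorm {n : ℕ} (P : Matrix (Fin n) (Fin n) ℝ)
    (u : EuclideanSpace ℝ (Fin n)) : ℝ :=
  Real.sqrt (wip P u u)

/-!
Let `V t = ‖x t - y t‖_P²`. The one-sided Lipschitz condition gives `V' ≤ -2 γ̄ V`, so
`log V` decreases at least as fast as `-2 ∫ γ̄` while `V > 0`; integrating and taking square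
roots gives the bound. If `V` vanishes somewhere, it stays zero afterwards: on an interval
`(c, t]` just after its last zero `c`, the integrated bound `V t ≤ V a · exp (∫ₐᵗ |2 γ̄|)`
forces `V t = 0` as `a → c⁺`.
-/

open Set Filter Topology

section Comparison

variable {V V' φ : ℝ → ℝ} {a b : ℝ}

theorem le_mul_exp_integral_of_deriv_le_mul_of_pos (hab : a ≤ b)
    (hcont : ContinuousOn V (Icc a b))
    (hderiv : ∀ t ∈ Ioo a b, HasDerivWithinAt V (V' t) (Ioi t) t)
    (hle : ∀ t ∈ Ioo a b, V' t ≤ φ t * V t) (hφ : IntervalIntegrable φ volume a b)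
    (hpos : ∀ t ∈ Icc a b, 0 < V t) :
    V b ≤ V a * Real.exp (∫ t in a..b, φ t) := by
  have hlog : Real.log (V b) - Real.log (V a) ≤ ∫ t in a..b, φ t := by
    refine intervalIntegral.sub_le_integral_of_hasDeriv_right_of_le (g' := fun t => V' t / V t)
      hab (hcont.log fun t ht => (hpos t ht).ne') (fun t ht => ?_)
      ((intervalIntegrable_iff_integrableOn_Icc_of_le hab).1 hφ) (fun t ht => ?_)
    · exact (hderiv t ht).log (hpos t (Ioo_subset_Icc_self ht)).ne'
    · exact (div_le_iff₀ (hpos t (Ioo_subset_Icc_self ht))).2 (hle t ht)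
  calc V b = Real.exp (Real.log (V b)) := (Real.exp_log (hpos b ⟨hab, le_rfl⟩)).symm
    _ ≤ Real.exp (Real.log (V a) + ∫ t in a..b, φ t) := Real.exp_le_exp.2 (by linarith)
    _ = V a * Real.exp (∫ t in a..b, φ t) := by
      rw [Real.exp_add, Real.exp_log (hpos a ⟨le_rfl, hab⟩)]

theorem eq_zero_of_deriv_le_mul_of_eq_zero
    (hcont : ContinuousOn V (Icc a b))
    (hderiv : ∀ t ∈ Ioo a b, HasDerivWithinAt V (V' t) (Ioi t) t)
    (hle : ∀ t ∈ Ioo a b, V' t ≤ φ t * V t) (hφ : IntervalIntegrable φ volume a b)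
    (hnonneg : ∀ t ∈ Icc a b, 0 ≤ V t) {c : ℝ} (hc : c ∈ Icc a b) (hVc : V c = 0) :
    V b = 0 := by
  by_contra hVb
  set S := Icc a b ∩ V ⁻¹' {0}
  have hSbdd : BddAbove S := ⟨b, fun t ht => ht.1.2⟩
  have hlast : sSup S ∈ S :=
    (hcont.preimage_isClosed_of_isClosed isClosed_Icc isClosed_singleton).csSup_mem
      ⟨c, hc, hVc⟩ hSbdd
  set d := sSup S
  have hdb : d < b := lt_of_le_of_ne hlast.1.2 fun h => hVb (h ▸ hlast.2)
  have hpos : ∀ t ∈ Ioc d b, 0 < V t := fun t ht =>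
    (hnonneg t ⟨hlast.1.1.trans ht.1.le, ht.2⟩).lt_of_ne' fun h =>
      (le_csSup hSbdd ⟨⟨hlast.1.1.trans ht.1.le, ht.2⟩, h⟩).not_gt ht.1
  have hbound : ∀ t ∈ Ioc d b, V b ≤ V t * Real.exp (∫ s in d..b, |φ s|) := by
    intro t ht
    have hat : a ≤ t := hlast.1.1.trans ht.1.le
    have hsub' : Icc t b ⊆ Icc a b := Icc_subset_Icc_left hat
    have hsub : uIcc t b ⊆ uIcc a b := by
      rw [uIcc_of_le ht.2, uIcc_of_le (hc.1.trans hc.2)]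
      exact hsub'
    have hφtb := hφ.mono_set hsub
    calc V b ≤ V t * Real.exp (∫ s in t..b, φ s) :=
          le_mul_exp_integral_of_deriv_le_mul_of_pos ht.2 (hcont.mono hsub')
            (fun s hs => hderiv s (Ioo_subset_Ioo_left hat hs))
            (fun s hs => hle s (Ioo_subset_Ioo_left hat hs)) hφtb
            fun s hs => hpos s ⟨ht.1.trans_le hs.1, hs.2⟩
      _ ≤ V t * Real.exp (∫ s in d..b, |φ s|) := by
        gcongr
        · exact (hpos t ht).le
        calc ∫ s in t..b, φ s ≤ ∫ s in t..b, |φ s| :=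
              intervalIntegral.integral_mono_on ht.2 hφtb hφtb.abs fun s _ => le_abs_self _
          _ ≤ ∫ s in d..b, |φ s| :=
              intervalIntegral.integral_mono_interval ht.1.le ht.2 le_rfl
                (Eventually.of_forall fun s => abs_nonneg _)
                (hφ.mono_set (uIcc_subset_uIcc (Icc_subset_uIcc hlast.1) right_mem_uIcc)).abs
  have hlim : Tendsto (fun t => V t * Real.exp (∫ s in d..b, |φ s|)) (𝓝[>] d)
      (𝓝 (V d * Real.exp (∫ s in d..b, |φ s|))) :=
    ((hcont d hlast.1).mono_of_mem_nhdsWithin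
      (Icc_mem_nhdsGT_of_mem ⟨hlast.1.1, hdb⟩)).tendsto.mul_const _
  have hVb_le : V b ≤ V d * Real.exp (∫ s in d..b, |φ s|) :=
    ge_of_tendsto hlim (eventually_of_mem (Ioc_mem_nhdsGT hdb) hbound)
  rw [hlast.2, zero_mul] at hVb_le
  exact hVb (hVb_le.antisymm (hnonneg b ⟨hc.1.trans hc.2, le_rfl⟩))

theorem le_mul_exp_integral_of_deriv_le_mul (hab : a ≤ b)
    (hcont : ContinuousOn V (Icc a b))
    (hderiv : ∀ t ∈ Ioo a b, HasDerivWithinAt V (V' t) (Ioi t) t)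
    (hle : ∀ t ∈ Ioo a b, V' t ≤ φ t * V t) (hφ : IntervalIntegrable φ volume a b)
    (hnonneg : ∀ t ∈ Icc a b, 0 ≤ V t) :
    V b ≤ V a * Real.exp (∫ t in a..b, φ t) := by
  by_cases hzero : ∃ c ∈ Icc a b, V c = 0
  · obtain ⟨c, hc, hVc⟩ := hzero
    rw [eq_zero_of_deriv_le_mul_of_eq_zero hcont hderiv hle hφ hnonneg hc hVc]
    exact mul_nonneg (hnonneg a ⟨le_rfl, hab⟩) (Real.exp_nonneg _)
  · push Not at hzero
    exact le_mul_exp_integral_of_deriv_le_mul_of_pos hab hcont hderiv hle hφ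
      fun t ht => (hnonneg t ht).lt_of_ne' (hzero t ht)

end Comparison

section WeightedInnerProduct

variable {n : ℕ} {P : Matrix (Fin n) (Fin n) ℝ}

theorem wip_eq_sum (u v : EuclideanSpace ℝ (Fin n)) :
    wip P u v = ∑ i, u i * ∑ j, P i j * v j := by
  simp [wip, Matrix.mulVec, dotProduct]

theorem wip_self_nonneg (hP : P.PosSemidef) (u : EuclideanSpace ℝ (Fin n)) :
    0 ≤ wip P u u := by
  simpa [wip, dotProduct] using hP.re_dotProduct_nonneg (fun i => u i)

theorem wnorm_sq (hP : P.PosSemidef) (u : EuclideanSpace ℝ (Fin n)) : wnorm P u ^ 2 = wip P u u :=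
  Real.sq_sqrt (wip_self_nonneg hP u)

theorem wip_comm (hP : P.IsSymm) (u v : EuclideanSpace ℝ (Fin n)) : wip P u v = wip P v u := by
  simp only [wip_eq_sum, Finset.mul_sum]
  rw [Finset.sum_comm]
  refine Finset.sum_congr rfl fun j _ => Finset.sum_congr rfl fun i _ => ?_
  rw [hP.apply j i]
  ring

theorem HasDerivAt.wip {u v : ℝ → EuclideanSpace ℝ (Fin n)} {u' v' : EuclideanSpace ℝ (Fin n)}
    {t : ℝ} (hu : HasDerivAt u u' t) (hv : HasDerivAt v v' t) :
    HasDerivAt (fun s => wip P (u s) (v s)) (wip P u' (v t) + wip P (u t) v') t := by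
  have hcoord {w : ℝ → EuclideanSpace ℝ (Fin n)} {w'} (hw : HasDerivAt w w' t) (i : Fin n) :
      HasDerivAt (fun s => w s i) (w' i) t :=
    (EuclideanSpace.proj (𝕜 := ℝ) i).hasFDerivAt.comp_hasDerivAt t hw
  simp only [wip_eq_sum, ← Finset.sum_add_distrib]
  exact HasDerivAt.fun_sum fun i _ =>
    (hcoord hu i).mul (HasDerivAt.fun_sum fun j _ => (hcoord hv j).const_mul (P i j))

end WeightedInnerProduct

theorem stmt_0 {n : ℕ} (P : Matrix (Fin n) (Fin n) ℝ)
    (hPsymm : P.IsSymm) (hPpos : P.PosDef)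
    (g : EuclideanSpace ℝ (Fin n) → ℝ → EuclideanSpace ℝ (Fin n))
    (gam : ℝ → ℝ) (t₀ : ℝ)
    (hInt : ∀ a b : ℝ, t₀ ≤ a → a ≤ b → IntervalIntegrable gam volume a b)
    (hOSL : ∀ x y : EuclideanSpace ℝ (Fin n), ∀ t : ℝ, t₀ ≤ t →
      wip P (x - y) (g x t - g y t) ≤ -gam t * (wnorm P (x - y)) ^ 2)
    (x y : ℝ → EuclideanSpace ℝ (Fin n))
    (hx : ∀ t : ℝ, t₀ ≤ t → HasDerivAt x (g (x t) t) t)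
    (hy : ∀ t : ℝ, t₀ ≤ t → HasDerivAt y (g (y t) t) t) :
    ∀ t : ℝ, t₀ ≤ t →
      wnorm P (x t - y t) ≤ Real.exp (-∫ s in t₀..t, gam s) * wnorm P (x t₀ - y t₀) := by
  intro T hT
  set V := fun t => wip P (x t - y t) (x t - y t)
  have hV : ∀ t, t₀ ≤ t →
      HasDerivAt V (2 * wip P (x t - y t) (g (x t) t - g (y t) t)) t := fun t ht => by
    have hz := (hx t ht).fun_sub (hy t ht)
    have hVt := hz.wip (P := P) hz
    rwa [wip_comm hPsymm _ (x t - y t), ← two_mul] at hVt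
  have hVT : V T ≤ V t₀ * Real.exp (∫ s in t₀..T, -2 * gam s) := by
    refine le_mul_exp_integral_of_deriv_le_mul hT
      (fun t ht => (hV t ht.1).continuousAt.continuousWithinAt)
      (fun t ht => (hV t ht.1.le).hasDerivWithinAt) (fun t ht => ?_)
      ((hInt t₀ T le_rfl hT).const_mul (-2)) fun t _ => wip_self_nonneg hPpos.posSemidef _
    have hosl := hOSL (x t) (y t) t ht.1.le
    rw [wnorm_sq hPpos.posSemidef] at hosl
    linarith
  calc wnorm P (x T - y T) = Real.sqrt (V T) := rfl
    _ ≤ Real.sqrt (V t₀ * Real.exp (∫ s in t₀..T, -2 * gam s)) := Real.sqrt_le_sqrt hVT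
    _ = Real.exp (-∫ s in t₀..T, gam s) * wnorm P (x t₀ - y t₀) := by
      rw [intervalIntegral.integral_const_mul, show -2 * ∫ s in t₀..T, gam s
        = (-∫ s in t₀..T, gam s) + -∫ s in t₀..T, gam s by ring, Real.exp_add,
        Real.sqrt_mul (wip_self_nonneg hPpos.posSemidef _),
        Real.sqrt_mul_self (Real.exp_nonneg _), mul_comm]
      rfl
end

section
/- Suppose that for every t ≥ t₀ the map x ↦ g x t is differentiable on E, with Fréchet derivative Dg(x, t) : E →L[ℝ] E at each x. Then the following are equivalent: (i) ⟪v, P.mulVec (Dg(x, t) v)⟫ ≤ −γ̄(t) · ‖v‖_P² for all x, v ∈ E and all t ≥ t₀; (ii) g satisfies the one-sided Lipschitz condition with rate γ̄ (with respect to ‖·‖_P) on [t₀, ∞). -/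
/-!
(i) ⇒ (ii) is the mean value theorem for `s ↦ ⟪x - y, g (y + s • (x - y)) t⟫_P` on `[0, 1]`.
(ii) ⇒ (i): applied to the points `x + s • v` and `x`, condition (ii) bounds the difference
quotients of `s ↦ ⟪v, g (x + s • v) t⟫_P` at `0⁺` by `-γ̄(t) ‖v‖_P²`, and they converge to
`⟪v, Dg(x, t) v⟫_P`.
-/

section OneSidedBound

variable {E F : Type*} [NormedAddCommGroup E] [NormedSpace ℝ E]
  [NormedAddCommGroup F] [NormedSpace ℝ F] {B : E →ₗ[ℝ] F →L[ℝ] ℝ} {f : E → F}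
  {f' : E → E →L[ℝ] F}

theorem apply_sub_le_of_apply_fderiv_le (hf : ∀ x, HasFDerivAt f (f' x) x) {M : E → ℝ}
    (h : ∀ x v, B v (f' x v) ≤ M v) (x y : E) : B (x - y) (f x - f y) ≤ M (x - y) := by
  obtain ⟨z, -, hz⟩ := domain_mvt (f := fun u => B (x - y) (f u)) (s := Set.univ) (x := y) (y := x)
    (fun u _ => ((B (x - y)).hasFDerivAt.comp u (hf u)).hasFDerivWithinAt)
    convex_univ trivial trivial
  rw [map_sub, hz]
  exact h z (x - y)

theorem apply_fderiv_le_of_apply_sub_le {x v : E} (hf : HasFDerivAt f (f' x) x) {K : ℝ}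
    (h : ∀ s : ℝ, 0 < s → B (s • v) (f (x + s • v) - f x) ≤ s ^ 2 * K) :
    B v (f' x v) ≤ K := by
  have hline : HasLineDerivAt ℝ (fun u => B v (f u)) (B v (f' x v)) x v :=
    ((B v).hasFDerivAt.comp x hf).hasLineDerivAt v
  refine le_of_tendsto hline.tendsto_slope_zero_right ?_
  filter_upwards [self_mem_nhdsWithin] with s (hs : 0 < s)
  have hquot : s * (B v (f (x + s • v)) - B v (f x)) ≤ s * (s * K) := by
    simpa only [map_smul, map_sub, FunLike.coe_smul, Pi.smul_apply, smul_eq_mul,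
      pow_two, mul_assoc, mul_sub] using h s hs
  rw [smul_eq_mul, inv_mul_le_iff₀ hs]
  exact le_of_mul_le_mul_left hquot hs

theorem apply_fderiv_le_iff_apply_sub_le (hf : ∀ x, HasFDerivAt f (f' x) x) {M : E → ℝ}
    (hM : ∀ (s : ℝ) v, M (s • v) = s ^ 2 * M v) :
    (∀ x v, B v (f' x v) ≤ M v) ↔ ∀ x y, B (x - y) (f x - f y) ≤ M (x - y) := by
  refine ⟨apply_sub_le_of_apply_fderiv_le hf, fun h x v => ?_⟩
  refine apply_fderiv_le_of_apply_sub_le (hf x) fun s _ => ?_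
  simpa [hM] using h (x + s • v) x

end OneSidedBound

section WeightedInner

variable {n : ℕ} (P : Matrix (Fin n) (Fin n) ℝ)

noncomputable def wipLinearMap :
    EuclideanSpace ℝ (Fin n) →ₗ[ℝ] EuclideanSpace ℝ (Fin n) →L[ℝ] ℝ :=
  LinearMap.toContinuousLinearMap.toLinearMap ∘ₗ
    (Matrix.toLinearMap₂' ℝ P).compl₁₂ (WithLp.linearEquiv 2 ℝ (Fin n → ℝ)).toLinearMap
      (WithLp.linearEquiv 2 ℝ (Fin n → ℝ)).toLinearMap

@[simp]
theorem wipLinearMap_apply (u v : EuclideanSpace ℝ (Fin n)) : wipLinearMap P u v = wip P u v := by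
  simp [wipLinearMap, wip, Matrix.toLinearMap₂'_apply', dotProduct]

theorem wnorm_smul (s : ℝ) (v : EuclideanSpace ℝ (Fin n)) :
    wnorm P (s • v) = |s| * wnorm P v := by
  have hquad : wip P (s • v) (s • v) = s ^ 2 * wip P v v := by
    simp only [← wipLinearMap_apply, map_smul, FunLike.coe_smul, Pi.smul_apply,
      smul_eq_mul]
    ring
  rw [wnorm, wnorm, hquad, Real.sqrt_mul (sq_nonneg s), Real.sqrt_sq_eq_abs]

end WeightedInner

theorem stmt_1_general {n : ℕ} (P : Matrix (Fin n) (Fin n) ℝ)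
    (g : EuclideanSpace ℝ (Fin n) → ℝ → EuclideanSpace ℝ (Fin n))
    (gam : ℝ → ℝ) (t₀ : ℝ)
    (Dg : EuclideanSpace ℝ (Fin n) → ℝ →
      (EuclideanSpace ℝ (Fin n) →L[ℝ] EuclideanSpace ℝ (Fin n)))
    (hDg : ∀ t : ℝ, t₀ ≤ t → ∀ x : EuclideanSpace ℝ (Fin n),
      HasFDerivAt (fun z => g z t) (Dg x t) x) :
    ((∀ x v : EuclideanSpace ℝ (Fin n), ∀ t : ℝ, t₀ ≤ t →
        wip P v (Dg x t v) ≤ -gam t * (wnorm P v) ^ 2) ↔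
      (∀ x y : EuclideanSpace ℝ (Fin n), ∀ t : ℝ, t₀ ≤ t →
        wip P (x - y) (g x t - g y t) ≤ -gam t * (wnorm P (x - y)) ^ 2)) := by
  have hfixed (t : ℝ) (ht : t₀ ≤ t) :=
    apply_fderiv_le_iff_apply_sub_le (B := wipLinearMap P) (hDg t ht)
      (M := fun v => -gam t * wnorm P v ^ 2)
      fun s v => by rw [wnorm_smul, mul_pow, sq_abs]; ring
  simp only [wipLinearMap_apply] at hfixed
  exact ⟨fun h x y t ht => (hfixed t ht).mp (fun x v => h x v t ht) x y,
    fun h x v t ht => (hfixed t ht).mpr (fun x y => h x y t ht) x v⟩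

theorem stmt_1 {n : ℕ} (P : Matrix (Fin n) (Fin n) ℝ)
    (hPsymm : P.IsSymm) (hPpos : P.PosDef)
    (g : EuclideanSpace ℝ (Fin n) → ℝ → EuclideanSpace ℝ (Fin n))
    (gam : ℝ → ℝ) (t₀ : ℝ)
    (Dg : EuclideanSpace ℝ (Fin n) → ℝ →
      (EuclideanSpace ℝ (Fin n) →L[ℝ] EuclideanSpace ℝ (Fin n)))
    (hDg : ∀ t : ℝ, t₀ ≤ t → ∀ x : EuclideanSpace ℝ (Fin n),
      HasFDerivAt (fun z => g z t) (Dg x t) x) :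
    ((∀ x v : EuclideanSpace ℝ (Fin n), ∀ t : ℝ, t₀ ≤ t →
        wip P v (Dg x t v) ≤ -gam t * (wnorm P v) ^ 2) ↔
      (∀ x y : EuclideanSpace ℝ (Fin n), ∀ t : ℝ, t₀ ≤ t →
        wip P (x - y) (g x t - g y t) ≤ -gam t * (wnorm P (x - y)) ^ 2)) :=
  stmt_1_general P g gam t₀ Dg hDg
end

section
/- Suppose g : E → ℝ → E satisfies the one-sided Lipschitz condition with rate γ̄ : ℝ → ℝ (with respect to ‖·‖_P) on [0, ∞), with γ̄(t) > 0 for all t ≥ 0. Let h > 0, let x* : ℝ → E satisfy g (x* t) t = 0 for all t ≥ 0, and let y : ℕ → E satisfy the implicit Euler recursion y (k+1) = y k + h • g (y (k+1)) ((k+1)·h) for all k. Then for every k ≥ 1, ‖y k − x* (k·h)‖_P ≤ (∏_{m=1}^{k} (1 + h·γ̄(m·h))⁻¹) · ‖y 0 − x* 0‖_P + ∑_{m=1}^{k} (∏_{r=m}^{k} (1 + h·γ̄(r·h))⁻¹) · ‖x* (m·h) − x* ((m−1)·h)‖_P. -/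
open Finset

/-!
Writing `P = Bᵀ B`, the weighted inner product becomes the Euclidean one after applying `B`, so
`‖·‖_P` is a Hilbert seminorm. With `eₖ₊₁ = yₖ₊₁ − x*(tₖ₊₁)`, the implicit Euler step reads
`eₖ₊₁ = (yₖ − x*(tₖ₊₁)) + h (g(yₖ₊₁) − g(x*(tₖ₊₁)))`; pairing with `eₖ₊₁` and using the one-sided
Lipschitz bound gives `(1 + hγ̄(tₖ₊₁)) ‖eₖ₊₁‖_P ≤ ‖yₖ − x*(tₖ₊₁)‖_P`, which the triangle inequality
turns into `‖eₖ₊₁‖_P ≤ (1 + hγ̄(tₖ₊₁))⁻¹ (‖eₖ‖_P + ‖x*(tₖ₊₁) − x*(tₖ)‖_P)`. Unrolling this linear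
recursion gives the bound.
-/

open scoped Matrix MatrixOrder RealInnerProductSpace

section WeightedNorm

variable {ι : Type*} [Fintype ι] {n : ℕ}

lemma wip_transpose_mul_self (B : Matrix ι (Fin n) ℝ) (u v : EuclideanSpace ℝ (Fin n)) :
    wip (Bᵀ * B) u v = ⟪B.toEuclideanLin u, B.toEuclideanLin v⟫ := by
  rw [EuclideanSpace.inner_eq_star_dotProduct]
  change u.ofLp ⬝ᵥ (Bᵀ * B) *ᵥ v.ofLp = _
  rw [Matrix.ofLp_toLpLin, Matrix.ofLp_toLpLin, ← Matrix.mulVec_mulVec, Matrix.dotProduct_mulVec,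
    Matrix.vecMul_transpose, star_trivial, dotProduct_comm]
  rfl

lemma wnorm_transpose_mul_self (B : Matrix ι (Fin n) ℝ) (u : EuclideanSpace ℝ (Fin n)) :
    wnorm (Bᵀ * B) u = ‖B.toEuclideanLin u‖ := by
  rw [wnorm, wip_transpose_mul_self, real_inner_self_eq_norm_sq, Real.sqrt_sq (norm_nonneg _)]

lemma Matrix.PosSemidef.exists_wip_eq_inner {P : Matrix (Fin n) (Fin n) ℝ} (hP : P.PosSemidef) :
    ∃ T : EuclideanSpace ℝ (Fin n) →ₗ[ℝ] EuclideanSpace ℝ (Fin n),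
      (∀ u v, wip P u v = ⟪T u, T v⟫) ∧ ∀ u, wnorm P u = ‖T u‖ := by
  obtain ⟨B, rfl⟩ := CStarAlgebra.nonneg_iff_eq_star_mul_self.mp hP.nonneg
  exact ⟨B.toEuclideanLin, wip_transpose_mul_self B, wnorm_transpose_mul_self B⟩

end WeightedNorm

lemma norm_le_inv_mul_of_eq_add_smul {F : Type*} [NormedAddCommGroup F] [InnerProductSpace ℝ F]
    {e a w : F} {γ h : ℝ} (he : e = a + h • w) (hw : ⟪e, w⟫ ≤ -γ * ‖e‖ ^ 2) (hh : 0 ≤ h)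
    (hγ : 0 < 1 + h * γ) :
    ‖e‖ ≤ (1 + h * γ)⁻¹ * ‖a‖ := by
  have hsplit : ‖e‖ ^ 2 = ⟪e, a⟫ + h * ⟪e, w⟫ := by
    rw [← real_inner_self_eq_norm_sq]
    nth_rw 2 [he]
    rw [inner_add_right, real_inner_smul_right]
  have hsq : (1 + h * γ) * ‖e‖ ^ 2 ≤ ‖a‖ * ‖e‖ := by
    nlinarith [real_inner_le_norm e a, mul_le_mul_of_nonneg_left hw hh]
  rw [le_inv_mul_iff₀ hγ]
  rcases (norm_nonneg e).eq_or_lt with he0 | he0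
  · rw [← he0]; simp
  · nlinarith

lemma le_prod_mul_add_sum_prod_mul {A B c : ℕ → ℝ} (hc : ∀ m, 0 ≤ c m)
    (hA : ∀ k, A (k + 1) ≤ c (k + 1) * (A k + B (k + 1))) (k : ℕ) :
    A k ≤ (∏ m ∈ Icc 1 k, c m) * A 0 + ∑ m ∈ Icc 1 k, (∏ r ∈ Icc m k, c r) * B m := by
  induction k with
  | zero => simp
  | succ k ih =>
    have hprod : ∀ m ∈ Icc 1 k, (∏ r ∈ Icc m (k + 1), c r) * B m =
        c (k + 1) * ((∏ r ∈ Icc m k, c r) * B m) := fun m hm => by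
      rw [prod_Icc_succ_top (by grind)]; ring
    calc A (k + 1) ≤ c (k + 1) * (A k + B (k + 1)) := hA k
      _ ≤ c (k + 1) * ((∏ m ∈ Icc 1 k, c m) * A 0 +
          ∑ m ∈ Icc 1 k, (∏ r ∈ Icc m k, c r) * B m + B (k + 1)) := by gcongr; exact hc _
      _ = _ := by
        rw [prod_Icc_succ_top (by omega), sum_Icc_succ_top (by omega), sum_congr rfl hprod,
          Icc_self, prod_singleton, ← mul_sum]
        ring

lemma norm_implicitEuler_sub_le {E F : Type*} [AddCommGroup E] [Module ℝ E] [NormedAddCommGroup F]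
    [InnerProductSpace ℝ F] (T : E →ₗ[ℝ] F) {g : E → E} {γ h : ℝ} {x₀ x₁ x' : E}
    (hx₁ : x₁ = x₀ + h • g x₁) (hx' : g x' = 0)
    (hosl : ⟪T (x₁ - x'), T (g x₁ - g x')⟫ ≤ -γ * ‖T (x₁ - x')‖ ^ 2) (hh : 0 ≤ h)
    (hγ : 0 < 1 + h * γ) :
    ‖T (x₁ - x')‖ ≤ (1 + h * γ)⁻¹ * ‖T (x₀ - x')‖ := by
  refine norm_le_inv_mul_of_eq_add_smul ?_ hosl hh hγ
  rw [hx', sub_zero, ← map_smul, ← map_add]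
  nth_rw 1 [hx₁]
  abel_nf

theorem stmt_4_general {n : ℕ} (P : Matrix (Fin n) (Fin n) ℝ)
    (hPpos : P.PosDef)
    (g : EuclideanSpace ℝ (Fin n) → ℝ → EuclideanSpace ℝ (Fin n))
    (gam : ℝ → ℝ)
    (hOSL : ∀ x y : EuclideanSpace ℝ (Fin n), ∀ t : ℝ, 0 ≤ t →
      wip P (x - y) (g x t - g y t) ≤ -gam t * (wnorm P (x - y)) ^ 2)
    (hgam : ∀ t : ℝ, 0 ≤ t → 0 < gam t)
    (h : ℝ) (hh : 0 < h)
    (xs : ℝ → EuclideanSpace ℝ (Fin n)) (hxs : ∀ t : ℝ, 0 ≤ t → g (xs t) t = 0)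
    (y : ℕ → EuclideanSpace ℝ (Fin n))
    (hy : ∀ k : ℕ, y (k + 1) = y k + h • g (y (k + 1)) (((k : ℝ) + 1) * h)) :
    ∀ k : ℕ, 1 ≤ k →
      wnorm P (y k - xs ((k : ℝ) * h)) ≤
        (∏ m ∈ Finset.Icc 1 k, (1 + h * gam ((m : ℝ) * h))⁻¹) * wnorm P (y 0 - xs 0) +
        ∑ m ∈ Finset.Icc 1 k,
          (∏ r ∈ Finset.Icc m k, (1 + h * gam ((r : ℝ) * h))⁻¹) *
            wnorm P (xs ((m : ℝ) * h) - xs (((m : ℝ) - 1) * h)) := by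
  obtain ⟨T, hwip, hwnorm⟩ := hPpos.posSemidef.exists_wip_eq_inner
  have hc : ∀ t : ℝ, 0 ≤ t → 0 < 1 + h * gam t := fun t ht => by
    have := hgam t ht
    positivity
  have hstep : ∀ k : ℕ, ‖T (y (k + 1) - xs ((k + 1 : ℕ) * h))‖ ≤
      (1 + h * gam ((k + 1 : ℕ) * h))⁻¹ *
        (‖T (y k - xs (k * h))‖ + ‖T (xs ((k + 1 : ℕ) * h) - xs (((k + 1 : ℕ) - 1) * h))‖) := by
    intro k
    push_cast
    rw [add_sub_cancel_right]
    have ht : (0 : ℝ) ≤ (k + 1) * h := by positivity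
    calc ‖T (y (k + 1) - xs ((k + 1) * h))‖
        ≤ (1 + h * gam ((k + 1) * h))⁻¹ * ‖T (y k - xs ((k + 1) * h))‖ := by
          refine norm_implicitEuler_sub_le T (g := fun x => g x ((k + 1) * h)) (hy k) (hxs _ ht)
            ?_ hh.le (hc _ ht)
          simpa only [hwip, hwnorm] using hOSL (y (k + 1)) (xs ((k + 1) * h)) _ ht
      _ ≤ _ := by
        gcongr
        · exact (inv_pos.2 (hc _ ht)).le
        · simpa only [map_sub, sub_sub_sub_cancel_right] using
            norm_sub_le (T (y k - xs (k * h))) (T (xs ((k + 1) * h) - xs (k * h)))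
  intro k _
  simpa only [hwnorm, Nat.cast_zero, zero_mul] using
    le_prod_mul_add_sum_prod_mul (A := fun k : ℕ => ‖T (y k - xs (k * h))‖)
      (fun m => (inv_pos.2 (hc _ (by positivity))).le) hstep k

theorem stmt_4 {n : ℕ} (P : Matrix (Fin n) (Fin n) ℝ)
    (hPsymm : P.IsSymm) (hPpos : P.PosDef)
    (g : EuclideanSpace ℝ (Fin n) → ℝ → EuclideanSpace ℝ (Fin n))
    (gam : ℝ → ℝ)
    (hOSL : ∀ x y : EuclideanSpace ℝ (Fin n), ∀ t : ℝ, 0 ≤ t →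
      wip P (x - y) (g x t - g y t) ≤ -gam t * (wnorm P (x - y)) ^ 2)
    (hgam : ∀ t : ℝ, 0 ≤ t → 0 < gam t)
    (h : ℝ) (hh : 0 < h)
    (xs : ℝ → EuclideanSpace ℝ (Fin n)) (hxs : ∀ t : ℝ, 0 ≤ t → g (xs t) t = 0)
    (y : ℕ → EuclideanSpace ℝ (Fin n))
    (hy : ∀ k : ℕ, y (k + 1) = y k + h • g (y (k + 1)) (((k : ℝ) + 1) * h)) :
    ∀ k : ℕ, 1 ≤ k →
      wnorm P (y k - xs ((k : ℝ) * h)) ≤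
        (∏ m ∈ Finset.Icc 1 k, (1 + h * gam ((m : ℝ) * h))⁻¹) * wnorm P (y 0 - xs 0) +
        ∑ m ∈ Finset.Icc 1 k,
          (∏ r ∈ Finset.Icc m k, (1 + h * gam ((r : ℝ) * h))⁻¹) *
            wnorm P (xs ((m : ℝ) * h) - xs (((m : ℝ) - 1) * h)) :=
  stmt_4_general P hPpos g gam hOSL hgam h hh xs hxs y hy
end

section
/- Suppose g : E → ℝ → E is uniformly ℓ-Lipschitz with respect to ‖·‖_P (i.e. ‖g x t − g y t‖_P ≤ ℓ·‖x − y‖_P for all x, y ∈ E, t ≥ 0) and satisfies the one-sided Lipschitz condition with constant rate γ (with respect to ‖·‖_P) on [0, ∞), where 0 < γ < ℓ. Let 0 < h < 2·γ/ℓ², let x* : ℝ → E satisfy g (x* t) t = 0 for all t ≥ 0 and ‖x* (k·h) − x* ((k−1)·h)‖_P ≤ ρ for all k ≥ 1, where ρ ≥ 0, and let y : ℕ → E satisfy the explicit Euler recursion y (k+1) = y k + h • g (y k) (k·h) for all k. Then for every k ≥ 1, ‖y k − x* (k·h)‖_P ≤ (1 − 2·h·γ + h²·ℓ²)^(k/2)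 · ‖y 0 − x* 0‖_P + ρ · ∑_{m=0}^{k−1} (1 − 2·h·γ + h²·ℓ²)^(m/2), and moreover limsup_{k→∞} ‖y k − x* (k·h)‖_P ≤ ρ/(1 − (1 − 2·h·γ + h²·ℓ²)^(1/2)). -/
open Finset Filter

/-!
Write `d = y k - x* (k h)` and `Δ = g (y k) (k h) - g (x* (k h)) (k h)`. Since `x* (k h)` is an
equilibrium of `g (·) (k h)`, one Euler step sends `d` to `d + h • Δ`, and expanding the square,
`‖d + h • Δ‖_P² = ‖d‖_P² + 2h⟪d, Δ⟫_P + h²‖Δ‖_P² ≤ (1 - 2hγ + h²ℓ²) ‖d‖_P²`.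
The equilibrium drifts by at most `ρ` per step, so by the triangle inequality for `‖·‖_P`
(Cauchy–Schwarz for the form `⟪·,·⟫_P`) the error obeys `e (k+1) ≤ c e k + ρ` with
`c = √(1 - 2hγ + h²ℓ²) < 1`. Unrolling gives the geometric bound, whose right-hand side tends to
`ρ / (1 - c)`.
-/

namespace LinearMap.BilinForm

variable {M : Type*} [AddCommGroup M] [Module ℝ M] {B : LinearMap.BilinForm ℝ M}

theorem apply_add_smul_self (hB : LinearMap.IsSymm B) (d Δ : M) (h : ℝ) :
    B (d + h • Δ) (d + h • Δ) = B d d + 2 * h * B d Δ + h ^ 2 * B Δ Δ := by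
  simp only [map_add, map_smul, LinearMap.add_apply, LinearMap.smul_apply, smul_eq_mul,
    ← hB.eq Δ d, RingHom.id_apply]
  ring

theorem sqrt_apply_add_self_le (hB : LinearMap.IsPosSemidef B) (x y : M) :
    √(B (x + y) (x + y)) ≤ √(B x x) + √(B y y) := by
  have hcs : B x y ≤ √(B x x) * √(B y y) := by
    rw [← Real.sqrt_mul (hB.nonneg x)]
    exact Real.le_sqrt_of_sq_le (B.apply_sq_le_of_symm hB.nonneg hB.isSymm x y)
  refine (Real.sqrt_le_left (by positivity)).2 ?_
  have hxy := apply_add_smul_self hB.isSymm x y 1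
  rw [one_smul] at hxy
  rw [hxy, add_sq, Real.sq_sqrt (hB.nonneg x), Real.sq_sqrt (hB.nonneg y)]
  linarith

theorem sqrt_apply_sub_self_comm (x y : M) : √(B (x - y) (x - y)) = √(B (y - x) (y - x)) := by
  rw [← neg_sub y x, map_neg, map_neg, LinearMap.neg_apply, neg_neg]

theorem sqrt_apply_add_smul_self_le (hB : LinearMap.IsPosSemidef B) {d Δ : M} {h γ ℓ : ℝ}
    (hh : 0 ≤ h) (hosl : B d Δ ≤ -γ * B d d) (hlip : √(B Δ Δ) ≤ ℓ * √(B d d)) :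
    √(B (d + h • Δ) (d + h • Δ)) ≤ √(1 - 2 * h * γ + h ^ 2 * ℓ ^ 2) * √(B d d) := by
  have hΔ : B Δ Δ ≤ ℓ ^ 2 * B d d := by
    rw [← Real.sq_sqrt (hB.nonneg Δ), ← Real.sq_sqrt (hB.nonneg d), ← mul_pow]
    exact pow_le_pow_left₀ (Real.sqrt_nonneg _) hlip 2
  rw [← Real.sqrt_mul' _ (hB.nonneg d), apply_add_smul_self hB.isSymm]
  refine Real.sqrt_le_sqrt ?_
  nlinarith [mul_le_mul_of_nonneg_left hΔ (sq_nonneg h)]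

end LinearMap.BilinForm

section WeightedNorm

open Matrix

variable {n : ℕ} {P : Matrix (Fin n) (Fin n) ℝ}

variable (P) in
noncomputable def wipForm : LinearMap.BilinForm ℝ (EuclideanSpace ℝ (Fin n)) :=
  (Matrix.toBilin' P).compl₁₂ (WithLp.linearEquiv 2 ℝ (Fin n → ℝ)).toLinearMap
    (WithLp.linearEquiv 2 ℝ (Fin n → ℝ)).toLinearMap

theorem wipForm_apply (u v : EuclideanSpace ℝ (Fin n)) :
    wipForm P u v = u.ofLp ⬝ᵥ P *ᵥ v.ofLp := by
  simp [wipForm, Matrix.toBilin'_apply']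

theorem wnorm_eq_sqrt_wipForm (u : EuclideanSpace ℝ (Fin n)) :
    wnorm P u = √(wipForm P u u) := by
  rw [wipForm_apply]; rfl

theorem wip_eq_wipForm (u v : EuclideanSpace ℝ (Fin n)) :
    wip P u v = wipForm P u v := by
  rw [wipForm_apply]; rfl

theorem isPosSemidef_wipForm (hPsymm : P.IsSymm) (hPpos : P.PosSemidef) :
    LinearMap.IsPosSemidef (wipForm P) where
  eq u v := by
    rw [RingHom.id_apply, wipForm_apply, wipForm_apply, Matrix.dotProduct_mulVec,
      dotProduct_comm, ← Matrix.mulVec_transpose, hPsymm.eq]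
  nonneg u := by
    simpa [wipForm_apply] using hPpos.dotProduct_mulVec_nonneg u.ofLp

theorem wnorm_add_smul_le (hPsymm : P.IsSymm) (hPpos : P.PosSemidef)
    {d v : EuclideanSpace ℝ (Fin n)} {h γ ℓ : ℝ} (hh : 0 ≤ h)
    (hosl : wip P d v ≤ -γ * wnorm P d ^ 2) (hlip : wnorm P v ≤ ℓ * wnorm P d) :
    wnorm P (d + h • v) ≤ √(1 - 2 * h * γ + h ^ 2 * ℓ ^ 2) * wnorm P d := by
  have hB := isPosSemidef_wipForm hPsymm hPpos
  simp only [wnorm_eq_sqrt_wipForm, wip_eq_wipForm, Real.sq_sqrt (hB.nonneg d)] at hosl hlip ⊢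
  exact LinearMap.BilinForm.sqrt_apply_add_smul_self_le hB hh hosl hlip

theorem wnorm_sub_comm (x y : EuclideanSpace ℝ (Fin n)) : wnorm P (x - y) = wnorm P (y - x) := by
  simp only [wnorm_eq_sqrt_wipForm, LinearMap.BilinForm.sqrt_apply_sub_self_comm x y]

theorem wnorm_sub_le_wnorm_sub_add_wnorm_sub (hPsymm : P.IsSymm) (hPpos : P.PosSemidef)
    (a b c : EuclideanSpace ℝ (Fin n)) :
    wnorm P (a - c) ≤ wnorm P (a - b) + wnorm P (b - c) := by
  simp only [wnorm_eq_sqrt_wipForm]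
  rw [← sub_add_sub_cancel a b c]
  exact LinearMap.BilinForm.sqrt_apply_add_self_le (isPosSemidef_wipForm hPsymm hPpos) _ _

end WeightedNorm

theorem le_pow_mul_add_geom_sum {e : ℕ → ℝ} {c ρ : ℝ} (hc : 0 ≤ c)
    (he : ∀ k, e (k + 1) ≤ c * e k + ρ) (k : ℕ) :
    e k ≤ c ^ k * e 0 + ρ * ∑ m ∈ range k, c ^ m := by
  induction k with
  | zero => simp
  | succ k ih =>
    calc e (k + 1) ≤ c * e k + ρ := he k
      _ ≤ c * (c ^ k * e 0 + ρ * ∑ m ∈ range k, c ^ m) + ρ := by gcongr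
      _ = c ^ (k + 1) * e 0 + ρ * ∑ m ∈ range (k + 1), c ^ m := by
        rw [geom_sum_succ]; ring

theorem limsup_le_div_one_sub {e : ℕ → ℝ} {a c ρ : ℝ} (he0 : ∀ k, 0 ≤ e k) (hc0 : 0 ≤ c)
    (hc1 : c < 1) (hρ : 0 ≤ ρ) (he : ∀ k, e k ≤ c ^ k * a + ρ * ∑ m ∈ range k, c ^ m) :
    limsup e atTop ≤ ρ / (1 - c) := by
  have hlim : Tendsto (fun k : ℕ => c ^ k * a + ρ / (1 - c)) atTop (nhds (ρ / (1 - c))) := by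
    simpa using ((tendsto_pow_atTop_nhds_zero_of_lt_one hc0 hc1).mul_const a).add_const
      (ρ / (1 - c))
  have hle : ∀ k, e k ≤ c ^ k * a + ρ / (1 - c) := fun k => by
    have hgeom : ∑ m ∈ range k, c ^ m ≤ 1 / (1 - c) := by
      have := geom_sum_Ico_le_of_lt_one (m := 0) (n := k) hc0 hc1
      rwa [pow_zero, ← range_eq_Ico] at this
    calc e k ≤ c ^ k * a + ρ * ∑ m ∈ range k, c ^ m := he k
      _ ≤ c ^ k * a + ρ / (1 - c) := by
        rw [div_eq_mul_one_div]; gcongr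
  calc limsup e atTop ≤ limsup (fun k : ℕ => c ^ k * a + ρ / (1 - c)) atTop :=
        limsup_le_limsup (Eventually.of_forall hle) (isCoboundedUnder_le_of_le atTop he0)
          hlim.isBoundedUnder_le
    _ = ρ / (1 - c) := hlim.limsup_eq

theorem one_sub_two_mul_add_sq_mul_sq_lt_one {h γ ℓ : ℝ} (hh : 0 < h)
    (hh2 : h < 2 * γ / ℓ ^ 2) : 1 - 2 * h * γ + h ^ 2 * ℓ ^ 2 < 1 := by
  have hℓ : 0 < ℓ ^ 2 := by
    -- for `ℓ = 0` the bound `hh2` reads `h < 0`, as `2 * γ / 0 = 0`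
    refine (sq_nonneg ℓ).lt_of_ne fun h0 => ?_
    rw [← h0, div_zero] at hh2
    exact hh.not_gt hh2
  have : h * ℓ ^ 2 < 2 * γ := (lt_div_iff₀ hℓ).1 hh2
  nlinarith

theorem stmt_8_general {n : ℕ} (P : Matrix (Fin n) (Fin n) ℝ)
    (hPsymm : P.IsSymm) (hPpos : P.PosDef)
    (g : EuclideanSpace ℝ (Fin n) → ℝ → EuclideanSpace ℝ (Fin n))
    (ℓ γ : ℝ)
    (hLip : ∀ x y : EuclideanSpace ℝ (Fin n), ∀ t : ℝ, 0 ≤ t →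
      wnorm P (g x t - g y t) ≤ ℓ * wnorm P (x - y))
    (hOSL : ∀ x y : EuclideanSpace ℝ (Fin n), ∀ t : ℝ, 0 ≤ t →
      wip P (x - y) (g x t - g y t) ≤ -γ * (wnorm P (x - y)) ^ 2)
    (h : ℝ) (hh : 0 < h) (hh2 : h < 2 * γ / ℓ ^ 2)
    (xs : ℝ → EuclideanSpace ℝ (Fin n)) (hxs : ∀ t : ℝ, 0 ≤ t → g (xs t) t = 0)
    (ρ : ℝ) (hρ : 0 ≤ ρ)
    (hxsmove : ∀ k : ℕ, 1 ≤ k →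
      wnorm P (xs ((k : ℝ) * h) - xs (((k : ℝ) - 1) * h)) ≤ ρ)
    (y : ℕ → EuclideanSpace ℝ (Fin n))
    (hy : ∀ k : ℕ, y (k + 1) = y k + h • g (y k) ((k : ℝ) * h)) :
    (∀ k : ℕ, 1 ≤ k →
      wnorm P (y k - xs ((k : ℝ) * h)) ≤
        Real.sqrt (1 - 2 * h * γ + h ^ 2 * ℓ ^ 2) ^ k * wnorm P (y 0 - xs 0) +
          ρ * ∑ m ∈ Finset.range k, Real.sqrt (1 - 2 * h * γ + h ^ 2 * ℓ ^ 2) ^ m) ∧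
    limsup (fun k : ℕ => wnorm P (y k - xs ((k : ℝ) * h))) atTop ≤
      ρ / (1 - Real.sqrt (1 - 2 * h * γ + h ^ 2 * ℓ ^ 2)) := by
  set c := √(1 - 2 * h * γ + h ^ 2 * ℓ ^ 2)
  have hc1 : c < 1 :=
    (Real.sqrt_lt' one_pos).2 (by simpa using one_sub_two_mul_add_sq_mul_sq_lt_one hh hh2)
  have hstep : ∀ k : ℕ, wnorm P (y (k + 1) - xs (((k + 1 : ℕ) : ℝ) * h)) ≤
      c * wnorm P (y k - xs ((k : ℝ) * h)) + ρ := by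
    intro k
    have ht : 0 ≤ (k : ℝ) * h := by positivity
    have hosl := hOSL (y k) (xs ((k : ℝ) * h)) _ ht
    have hlip := hLip (y k) (xs ((k : ℝ) * h)) _ ht
    rw [hxs _ ht, sub_zero] at hosl hlip
    calc _ ≤ wnorm P (y (k + 1) - xs ((k : ℝ) * h)) +
          wnorm P (xs (((k + 1 : ℕ) : ℝ) * h) - xs ((k : ℝ) * h)) := by
          rw [wnorm_sub_comm (xs _)]
          exact wnorm_sub_le_wnorm_sub_add_wnorm_sub hPsymm hPpos.posSemidef _ _ _
      _ ≤ c * wnorm P (y k - xs ((k : ℝ) * h)) + ρ := by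
        gcongr
        · rw [hy k, add_sub_right_comm]
          exact wnorm_add_smul_le hPsymm hPpos.posSemidef hh.le hosl hlip
        · simpa using hxsmove (k + 1) le_add_self
  have hbound := le_pow_mul_add_geom_sum (e := fun k : ℕ => wnorm P (y k - xs ((k : ℝ) * h)))
    (Real.sqrt_nonneg _) hstep
  refine ⟨fun k _ => by simpa using hbound k, ?_⟩
  exact limsup_le_div_one_sub (fun _ => Real.sqrt_nonneg _) (Real.sqrt_nonneg _) hc1 hρ hbound

theorem stmt_8 {n : ℕ} (P : Matrix (Fin n) (Fin n) ℝ)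
    (hPsymm : P.IsSymm) (hPpos : P.PosDef)
    (g : EuclideanSpace ℝ (Fin n) → ℝ → EuclideanSpace ℝ (Fin n))
    (ℓ γ : ℝ)
    (hLip : ∀ x y : EuclideanSpace ℝ (Fin n), ∀ t : ℝ, 0 ≤ t →
      wnorm P (g x t - g y t) ≤ ℓ * wnorm P (x - y))
    (hOSL : ∀ x y : EuclideanSpace ℝ (Fin n), ∀ t : ℝ, 0 ≤ t →
      wip P (x - y) (g x t - g y t) ≤ -γ * (wnorm P (x - y)) ^ 2)
    (hγ : 0 < γ) (hγℓ : γ < ℓ)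
    (h : ℝ) (hh : 0 < h) (hh2 : h < 2 * γ / ℓ ^ 2)
    (xs : ℝ → EuclideanSpace ℝ (Fin n)) (hxs : ∀ t : ℝ, 0 ≤ t → g (xs t) t = 0)
    (ρ : ℝ) (hρ : 0 ≤ ρ)
    (hxsmove : ∀ k : ℕ, 1 ≤ k →
      wnorm P (xs ((k : ℝ) * h) - xs (((k : ℝ) - 1) * h)) ≤ ρ)
    (y : ℕ → EuclideanSpace ℝ (Fin n))
    (hy : ∀ k : ℕ, y (k + 1) = y k + h • g (y k) ((k : ℝ) * h)) :
    (∀ k : ℕ, 1 ≤ k →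
      wnorm P (y k - xs ((k : ℝ) * h)) ≤
        Real.sqrt (1 - 2 * h * γ + h ^ 2 * ℓ ^ 2) ^ k * wnorm P (y 0 - xs 0) +
          ρ * ∑ m ∈ Finset.range k, Real.sqrt (1 - 2 * h * γ + h ^ 2 * ℓ ^ 2) ^ m) ∧
    limsup (fun k : ℕ => wnorm P (y k - xs ((k : ℝ) * h))) atTop ≤
      ρ / (1 - Real.sqrt (1 - 2 * h * γ + h ^ 2 * ℓ ^ 2)) :=
  stmt_8_general P hPsymm hPpos g ℓ γ hLip hOSL h hh hh2 xs hxs ρ hρ hxsmove y hy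
end

section
/- Let y¹, y² : ℕ → E satisfy the explicit Euler recursion with step-size 1 for the ACCONEST flow, i.e. y¹ (k+1) = y¹ k + (y² k − y¹ k − (1/L)·∇f(y² k)) and y² (k+1) = y² k + (β·(y² k − y¹ k) − ((1 + β)/L)·∇f(y² k)) for all k. Then for every k, y¹ (k+1) = y² k − (1/L)·∇f(y² k) and y² (k+1) = y¹ (k+1) + β·(y¹ (k+1) − y¹ k); that is, the explicit Euler discretization of the ACCONEST flow with step-size 1 is exactly the Nesterov acceleration method with momentum coefficient β = (√L − √μ)/(√L + √μ). -/
open RealInnerProductSpace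

/-- The ACCONEST vector field. -/
noncomputable def accF {n : ℕ} (L β : ℝ)
    (gf : EuclideanSpace ℝ (Fin n) → EuclideanSpace ℝ (Fin n))
    (z : EuclideanSpace ℝ (Fin n) × EuclideanSpace ℝ (Fin n)) :
    EuclideanSpace ℝ (Fin n) × EuclideanSpace ℝ (Fin n) :=
  (z.2 - z.1 - (1 / L) • gf z.2, β • (z.2 - z.1) - ((1 + β) / L) • gf z.2)

theorem stmt_14 {n : ℕ} (μ L κ β : ℝ)
    (hμ : 0 < μ) (hμL : μ ≤ L)
    (hκ : κ = L / μ) (hβ : β = (Real.sqrt κ - 1) / (Real.sqrt κ + 1))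
    (f : EuclideanSpace ℝ (Fin n) → ℝ)
    (gf : EuclideanSpace ℝ (Fin n) → EuclideanSpace ℝ (Fin n))
    (hgrad : ∀ x, HasGradientAt f (gf x) x)
    (hsmooth : ∀ x y, ‖gf x - gf y‖ ≤ L * ‖x - y‖)
    (hsc : ∀ x y : EuclideanSpace ℝ (Fin n), ⟪gf x - gf y, x - y⟫ ≥ μ * ‖x - y‖ ^ 2)
    (y1 y2 : ℕ → EuclideanSpace ℝ (Fin n))
    (hy1 : ∀ k : ℕ, y1 (k + 1) = y1 k + (y2 k - y1 k - (1 / L) • gf (y2 k)))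
    (hy2 : ∀ k : ℕ,
      y2 (k + 1) = y2 k + (β • (y2 k - y1 k) - ((1 + β) / L) • gf (y2 k))) :
    (∀ k : ℕ, y1 (k + 1) = y2 k - (1 / L) • gf (y2 k) ∧
      y2 (k + 1) = y1 (k + 1) + β • (y1 (k + 1) - y1 k)) ∧
    β = (Real.sqrt L - Real.sqrt μ) / (Real.sqrt L + Real.sqrt μ) := by
  constructor
  · intro k
    have h1 : y1 (k + 1) = y2 k - (1 / L) • gf (y2 k) := by
      rw [hy1 k]; abel
    refine ⟨h1, ?_⟩
    rw [hy2 k, h1]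
    have : ((1 + β) / L : ℝ) = 1/L + β * (1/L) := by ring
    rw [this, add_smul, mul_smul]
    module
  · have hL : 0 < L := hμ.trans_le hμL
    have hsμ : 0 < Real.sqrt μ := Real.sqrt_pos.2 hμ
    have hsL : 0 < Real.sqrt L := Real.sqrt_pos.2 hL
    have hκ' : Real.sqrt κ = Real.sqrt L / Real.sqrt μ := by
      rw [hκ, Real.sqrt_div' _ hμ.le] <;> simp [Real.sqrt_div, hμ.le, hL.le]
    rw [hβ, hκ']
    have hd : Real.sqrt L + Real.sqrt μ ≠ 0 := by positivity
    have hd2 : Real.sqrt L / Real.sqrt μ + 1 ≠ 0 := by positivity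
    field_simp
end

section
/- Let x* ∈ E satisfy ∇f x* = 0, and let y¹, y² : ℕ → E satisfy the explicit Euler recursion with step-size 1 for the ACCONEST flow, i.e. (y¹ (k+1), y² (k+1)) = (y¹ k, y² k) + F (y¹ k, y² k) for all k. Then there exists a constant C ≥ 0 (depending only on y¹ 0, y² 0, f, μ, L) such that for every k, f (y¹ k) − f x* ≤ C · (1 − 1/√κ)^k. -/
open RealInnerProductSpace

/-!
Write `s = √κ`, so that `L = μ s²` and `β = (s - 1)/(s + 1)`. Along the Euler iterates the
Lyapunov function `V = f y¹ - f x* + μ/2 ‖z - x*‖²`, with `z = y² + s (y² - y¹)`, contracts by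
the factor `1 - 1/s` at each step: the new point `z'` is the convex combination
`(1 - 1/s) z + (1/s) y²` moved by `-(1/(sμ)) ∇f(y²)`, so convexity of `‖·‖²`, the descent lemma
for the gradient step `y¹' = y² - ∇f(y²)/L`, and the strong-convexity lower bounds of `f` at
`y²` towards `y¹` and `x*` combine into `V' ≤ (1 - 1/s) V`. Since `f y¹ - f x* ≤ V`, the claim
follows with `C = max (V 0) 0`.
-/

open Set

lemma le_image_one_of_deriv_ge_affine {h h' : ℝ → ℝ} {a : ℝ}
    (hh : ∀ t, HasDerivAt h (h' t) t) (hh' : ∀ t ∈ Ioo (0 : ℝ) 1, h' 0 + a * t ≤ h' t) :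
    h 0 + h' 0 + a / 2 ≤ h 1 := by
  have hderiv : ∀ t,
      HasDerivAt (fun t ↦ h t - t * h' 0 - a / 2 * t ^ 2) (h' t - h' 0 - a * t) t :=
    fun t ↦ (((hh t).sub ((hasDerivAt_id' t).mul_const (h' 0))).sub
        ((hasDerivAt_pow 2 t).const_mul (a / 2))).congr_deriv (by norm_num; ring)
  have hmono := monotoneOn_of_hasDerivWithinAt_nonneg (convex_Icc (0 : ℝ) 1)
    (fun t _ ↦ (hderiv t).continuousAt.continuousWithinAt)
    (fun t _ ↦ (hderiv t).hasDerivWithinAt)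
    (fun t ht ↦ by rw [interior_Icc] at ht; linarith [hh' t ht])
  have := hmono (left_mem_Icc.2 zero_le_one) (right_mem_Icc.2 zero_le_one) zero_le_one
  simp only at this
  linarith

section Gradient

variable {E : Type*} [NormedAddCommGroup E] [InnerProductSpace ℝ E] [CompleteSpace E]
  {f : E → ℝ} {gf : E → E}

lemma hasDerivAt_comp_add_smul (hgrad : ∀ x, HasGradientAt f (gf x) x) (x v : E) (t : ℝ) :
    HasDerivAt (fun t : ℝ ↦ f (x + t • v)) ⟪gf (x + t • v), v⟫ t := by
  have hline : HasDerivAt (fun t : ℝ ↦ x + t • v) v t := by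
    simpa using ((hasDerivAt_id t).smul_const v).const_add x
  simpa [InnerProductSpace.toDual_apply_apply, Function.comp_def] using
    (hgrad (x + t • v)).hasFDerivAt.comp_hasDerivAt t hline

lemma add_inner_add_le_of_strongMonotone_gradient {μ : ℝ}
    (hgrad : ∀ x, HasGradientAt f (gf x) x)
    (hsc : ∀ x y : E, ⟪gf x - gf y, x - y⟫ ≥ μ * ‖x - y‖ ^ 2) (x y : E) :
    f x + ⟪gf x, y - x⟫ + μ / 2 * ‖y - x‖ ^ 2 ≤ f y := by
  have h := le_image_one_of_deriv_ge_affine (a := μ * ‖y - x‖ ^ 2)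
    (hasDerivAt_comp_add_smul hgrad x (y - x)) fun t ht ↦ by
      have hmono := hsc (x + t • (y - x)) x
      rw [add_sub_cancel_left, inner_smul_right, inner_sub_left, norm_smul,
        Real.norm_eq_abs, abs_of_pos ht.1] at hmono
      simp only [zero_smul, add_zero]
      nlinarith [ht.1]
  simpa [mul_div_right_comm] using h

lemma le_add_inner_add_of_lipschitz_gradient {L : ℝ}
    (hgrad : ∀ x, HasGradientAt f (gf x) x)
    (hsmooth : ∀ x y : E, ‖gf x - gf y‖ ≤ L * ‖x - y‖) (x y : E) :
    f y ≤ f x + ⟪gf x, y - x⟫ + L / 2 * ‖y - x‖ ^ 2 := by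
  have h := le_image_one_of_deriv_ge_affine (a := -(L * ‖y - x‖ ^ 2))
    (fun t ↦ (hasDerivAt_comp_add_smul hgrad x (y - x) t).neg) fun t ht ↦ by
      have hlip := hsmooth (x + t • (y - x)) x
      have hcs := real_inner_le_norm (gf (x + t • (y - x)) - gf x) (y - x)
      rw [add_sub_cancel_left, norm_smul, Real.norm_eq_abs, abs_of_pos ht.1] at hlip
      rw [inner_sub_left] at hcs
      simp only [zero_smul, add_zero]
      nlinarith [ht.1, norm_nonneg (y - x)]
  simp only [Pi.neg_apply, zero_smul, add_zero, one_smul, add_sub_cancel] at h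
  linarith

lemma le_sub_of_gradient_step {L : ℝ}
    (hgrad : ∀ x, HasGradientAt f (gf x) x)
    (hsmooth : ∀ x y : E, ‖gf x - gf y‖ ≤ L * ‖x - y‖) (x : E) :
    f (x - (1 / L) • gf x) ≤ f x - 1 / (2 * L) * ‖gf x‖ ^ 2 := by
  have h := le_add_inner_add_of_lipschitz_gradient hgrad hsmooth x (x - (1 / L) • gf x)
  rw [sub_sub_cancel_left, inner_neg_right, inner_smul_right, real_inner_self_eq_norm_sq,
    norm_neg, norm_smul, Real.norm_eq_abs, mul_pow, sq_abs] at h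
  have hcoef : 1 / L - L / 2 * (1 / L) ^ 2 = 1 / (2 * L) := by
    rcases eq_or_ne L 0 with rfl | hL
    · simp
    · field_simp; norm_num
  nlinarith [hcoef]

end Gradient

section Lyapunov

variable {E : Type*} [NormedAddCommGroup E] [InnerProductSpace ℝ E]

noncomputable def acconestLyapunov (f : E → ℝ) (μ s : ℝ) (xs x y : E) : ℝ :=
  f x - f xs + μ / 2 * ‖y + s • (y - x) - xs‖ ^ 2

lemma sub_le_acconestLyapunov (f : E → ℝ) {μ : ℝ} (hμ : 0 ≤ μ) (s : ℝ) (xs x y : E) :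
    f x - f xs ≤ acconestLyapunov f μ s xs x y :=
  le_add_of_nonneg_right (by positivity)

lemma norm_sq_convex_combination_le {θ : ℝ} (h0 : 0 ≤ θ) (h1 : θ ≤ 1) (a b : E) :
    ‖(1 - θ) • a + θ • b‖ ^ 2 ≤ (1 - θ) * ‖a‖ ^ 2 + θ * ‖b‖ ^ 2 :=
  (convexOn_univ_norm.pow (fun _ _ ↦ norm_nonneg _) 2).2 trivial trivial (by linarith) h0
    (by ring)

theorem acconestLyapunov_euler_step_le [CompleteSpace E] {f : E → ℝ} {gf : E → E}
    {μ L s β : ℝ}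
    (hμ : 0 < μ) (hs : 1 ≤ s) (hL : L = μ * s ^ 2) (hβ : β = (s - 1) / (s + 1))
    (hgrad : ∀ x, HasGradientAt f (gf x) x)
    (hsmooth : ∀ x y, ‖gf x - gf y‖ ≤ L * ‖x - y‖)
    (hsc : ∀ x y : E, ⟪gf x - gf y, x - y⟫ ≥ μ * ‖x - y‖ ^ 2) (xs x y x' y' : E)
    (hx' : x' = x + (y - x - (1 / L) • gf y))
    (hy' : y' = y + (β • (y - x) - ((1 + β) / L) • gf y)) :
    acconestLyapunov f μ s xs x' y' ≤ (1 - 1 / s) * acconestLyapunov f μ s xs x y := by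
  set g := gf y
  set a := y + s • (y - x) - xs
  set w := (1 - 1 / s) • a + (1 / s) • (y - xs)
  have hs0 : 0 < s := by linarith
  have hz : y' + s • (y' - x') - xs = w - (1 / (s * μ)) • g := by
    simp only [w, a, hx', hy', hβ, hL]
    match_scalars <;> field_simp <;> ring
  have hdesc : f x' ≤ f y - 1 / (2 * L) * ‖g‖ ^ 2 := by
    rw [show x' = y - (1 / L) • g by rw [hx']; abel]
    exact le_sub_of_gradient_step hgrad hsmooth y
  have hconv : ‖w‖ ^ 2 ≤ (1 - 1 / s) * ‖a‖ ^ 2 + 1 / s * ‖y - xs‖ ^ 2 :=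
    norm_sq_convex_combination_le (by positivity) (div_le_one_of_le₀ hs hs0.le) _ _
  have hlow_xs := add_inner_add_le_of_strongMonotone_gradient hgrad hsc y xs
  have hlow_x := add_inner_add_le_of_strongMonotone_gradient hgrad hsc y x
  have hnorm : μ / 2 * ‖w - (1 / (s * μ)) • g‖ ^ 2
      = μ / 2 * ‖w‖ ^ 2 - 1 / s * ⟪w, g⟫ + 1 / (2 * L) * ‖g‖ ^ 2 := by
    rw [norm_sub_sq_real, real_inner_smul_right, norm_smul, mul_pow, Real.norm_eq_abs, sq_abs,
      hL]
    field_simp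
  have hinner : 1 / s * ⟪w, g⟫ = (1 - 1 / s) * ⟪y - x, g⟫ + 1 / s * ⟪y - xs, g⟫ := by
    have ha : a = s • (y - x) + (y - xs) := by simp only [a]; abel
    rw [inner_add_left, real_inner_smul_left, real_inner_smul_left, ha, inner_add_left,
      real_inner_smul_left]
    field_simp
    ring
  have e_x : ⟪g, x - y⟫ = -⟪y - x, g⟫ := by
    rw [real_inner_comm, ← inner_neg_left, neg_sub]
  have e_xs : ⟪g, xs - y⟫ = -⟪y - xs, g⟫ := by
    rw [real_inner_comm, ← inner_neg_left, neg_sub]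
  rw [e_x] at hlow_x
  rw [e_xs, norm_sub_rev] at hlow_xs
  have hq0 : 0 ≤ 1 - 1 / s := sub_nonneg.2 (div_le_one_of_le₀ hs hs0.le)
  have hdist : 0 ≤ (1 - 1 / s) * (μ / 2 * ‖x - y‖ ^ 2) := by positivity
  unfold acconestLyapunov
  rw [hz, hnorm, hinner]
  linarith [mul_le_mul_of_nonneg_left hlow_x hq0,
    mul_le_mul_of_nonneg_left hlow_xs (by positivity : (0 : ℝ) ≤ 1 / s),
    mul_le_mul_of_nonneg_left hconv (by positivity : (0 : ℝ) ≤ μ / 2)]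

end Lyapunov

theorem stmt_15_general {n : ℕ} (μ L κ β : ℝ)
    (hμ : 0 < μ) (hμL : μ ≤ L)
    (hκ : κ = L / μ) (hβ : β = (Real.sqrt κ - 1) / (Real.sqrt κ + 1))
    (f : EuclideanSpace ℝ (Fin n) → ℝ)
    (gf : EuclideanSpace ℝ (Fin n) → EuclideanSpace ℝ (Fin n))
    (hgrad : ∀ x, HasGradientAt f (gf x) x)
    (hsmooth : ∀ x y, ‖gf x - gf y‖ ≤ L * ‖x - y‖)
    (hsc : ∀ x y : EuclideanSpace ℝ (Fin n), ⟪gf x - gf y, x - y⟫ ≥ μ * ‖x - y‖ ^ 2)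
    (xs : EuclideanSpace ℝ (Fin n))
    (y1 y2 : ℕ → EuclideanSpace ℝ (Fin n))
    (hy : ∀ k : ℕ, (y1 (k + 1), y2 (k + 1)) = (y1 k, y2 k) + accF L β gf (y1 k, y2 k)) :
    ∃ C : ℝ, 0 ≤ C ∧
      ∀ k : ℕ, f (y1 k) - f xs ≤ C * (1 - 1 / Real.sqrt κ) ^ k := by
  have hκ1 : 1 ≤ κ := by rwa [hκ, one_le_div hμ]
  have hs : 1 ≤ Real.sqrt κ := Real.one_le_sqrt.2 hκ1
  have hL : L = μ * Real.sqrt κ ^ 2 := by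
    rw [Real.sq_sqrt (by linarith), hκ, mul_div_cancel₀ _ hμ.ne']
  have hq : 0 ≤ 1 - 1 / Real.sqrt κ := sub_nonneg.2 (div_le_one_of_le₀ hs (by linarith))
  set V : ℕ → ℝ := fun k ↦ acconestLyapunov f μ (Real.sqrt κ) xs (y1 k) (y2 k)
  have hstep : ∀ k, V (k + 1) ≤ (1 - 1 / Real.sqrt κ) * V k := fun k ↦ by
    obtain ⟨hy1, hy2⟩ := Prod.mk.inj (hy k)
    exact acconestLyapunov_euler_step_le hμ hs hL hβ hgrad hsmooth hsc xs _ _ _ _ hy1 hy2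
  refine ⟨max (V 0) 0, le_max_right _ _, fun k ↦ ?_⟩
  calc f (y1 k) - f xs ≤ V k := sub_le_acconestLyapunov f hμ.le _ xs _ _
    _ ≤ (1 - 1 / Real.sqrt κ) ^ k * V 0 := le_geom hq k fun k _ ↦ hstep k
    _ ≤ max (V 0) 0 * (1 - 1 / Real.sqrt κ) ^ k := by
      rw [mul_comm]; exact mul_le_mul_of_nonneg_right (le_max_left _ _) (pow_nonneg hq k)

theorem stmt_15 {n : ℕ} (μ L κ β : ℝ)
    (hμ : 0 < μ) (hμL : μ ≤ L)
    (hκ : κ = L / μ) (hβ : β = (Real.sqrt κ - 1) / (Real.sqrt κ + 1))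
    (f : EuclideanSpace ℝ (Fin n) → ℝ)
    (gf : EuclideanSpace ℝ (Fin n) → EuclideanSpace ℝ (Fin n))
    (hgrad : ∀ x, HasGradientAt f (gf x) x)
    (hsmooth : ∀ x y, ‖gf x - gf y‖ ≤ L * ‖x - y‖)
    (hsc : ∀ x y : EuclideanSpace ℝ (Fin n), ⟪gf x - gf y, x - y⟫ ≥ μ * ‖x - y‖ ^ 2)
    (xs : EuclideanSpace ℝ (Fin n)) (hxs : gf xs = 0)
    (y1 y2 : ℕ → EuclideanSpace ℝ (Fin n))
    (hy : ∀ k : ℕ, (y1 (k + 1), y2 (k + 1)) = (y1 k, y2 k) + accF L β gf (y1 k, y2 k)) :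
    ∃ C : ℝ, 0 ≤ C ∧
      ∀ k : ℕ, f (y1 k) - f xs ≤ C * (1 - 1 / Real.sqrt κ) ^ k :=
  stmt_15_general μ L κ β hμ hμL hκ hβ f gf hgrad hsmooth hsc xs y1 y2 hy
end

section
/- Let G : E × ℝ → E be differentiable (jointly, in the Fréchet sense), let μ > 0 and ρ ≥ 0, and suppose: for each t, the map x ↦ G (x, t) is μ-strongly monotone, i.e. ⟪G (x, t) − G (y, t), x − y⟫ ≥ μ·‖x − y‖² for all x, y ∈ E; the partial derivative of G in its time variable satisfies ‖∂_t G (x, t)‖ ≤ ρ for all x ∈ E and t ∈ ℝ; and x* : ℝ → E is differentiable with G (x* t, t) = 0 for all t. Then ‖deriv x* t‖ ≤ ρ/μ for every t; that is, the optimizer trajectory of a time-varying strongly convex problem moves with speed at most ρ/μ. -/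
/-! Differentiating `G (x* t, t) = 0` gives `∂ₓG · ẋ* = -∂ₜG`. Strong monotonicity of `G (·, t)`
makes `∂ₓG` coercive, `μ ‖v‖² ≤ ⟪∂ₓG v, v⟫`, so `μ ‖ẋ*‖² ≤ ⟪-∂ₜG, ẋ*⟫ ≤ ρ ‖ẋ*‖`. -/

open RealInnerProductSpace Filter Topology

section

variable {E F : Type*} [NormedAddCommGroup E] [InnerProductSpace ℝ E]
  [NormedAddCommGroup F] [NormedSpace ℝ F]

theorem HasFDerivAt.mul_norm_sq_le_inner_of_strongly_monotone {g : E → E} {A : E →L[ℝ] E}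
    {x : E} (hg : HasFDerivAt g A x) {μ : ℝ}
    (hmono : ∀ x y : E, ⟪g x - g y, x - y⟫ ≥ μ * ‖x - y‖ ^ 2) (v : E) :
    μ * ‖v‖ ^ 2 ≤ ⟪A v, v⟫ := by
  -- each difference quotient already satisfies the bound, which passes to the limit `A v`
  have hlim : Tendsto (fun c : ℝ => ⟪c • (g (x + c⁻¹ • v) - g x), v⟫) atTop (𝓝 ⟪A v, v⟫) :=
    ((hg.lim v tendsto_norm_atTop_atTop).inner tendsto_const_nhds)
  refine ge_of_tendsto hlim ?_
  filter_upwards [eventually_gt_atTop 0] with c hc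
  have hquot := hmono (x + c⁻¹ • v) x
  rw [add_sub_cancel_left, real_inner_smul_right, norm_smul, Real.norm_of_nonneg
    (inv_nonneg.mpr hc.le)] at hquot
  rw [real_inner_smul_left]
  calc μ * ‖v‖ ^ 2 = c * c * (μ * (c⁻¹ * ‖v‖) ^ 2) := by field_simp
    _ ≤ c * c * (c⁻¹ * ⟪g (x + c⁻¹ • v) - g x, v⟫) := by gcongr
    _ = c * ⟪g (x + c⁻¹ • v) - g x, v⟫ := by field_simp

theorem fderiv_apply_deriv_eq_neg_of_eventually_eq_zero {G : E × ℝ → F} {x : ℝ → E} {t : ℝ}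
    (hG : DifferentiableAt ℝ G (x t, t)) (hx : DifferentiableAt ℝ x t)
    (hzero : ∀ᶠ s in 𝓝 t, G (x s, s) = 0) :
    fderiv ℝ G (x t, t) (deriv x t, 0) = -fderiv ℝ G (x t, t) (0, 1) := by
  have hchain : HasDerivAt (fun s => G (x s, s)) (fderiv ℝ G (x t, t) (deriv x t, 1)) t :=
    hG.hasFDerivAt.comp_hasDerivAt (f := fun s => (x s, s)) t
      (hx.hasDerivAt.prodMk (hasDerivAt_id' t))
  have hconst : HasDerivAt (fun s => G (x s, s)) 0 t :=
    (hasDerivAt_const t (0 : F)).congr_of_eventuallyEq hzero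
  rw [eq_neg_iff_add_eq_zero, ← map_add, Prod.mk_add_mk, add_zero, zero_add]
  exact hchain.unique hconst

end

theorem le_div_of_mul_sq_le_mul {μ ρ a : ℝ} (hμ : 0 < μ) (hρ : 0 ≤ ρ) (ha : 0 ≤ a)
    (h : μ * a ^ 2 ≤ ρ * a) : a ≤ ρ / μ := by
  rw [le_div_iff₀' hμ]
  rcases ha.eq_or_lt with rfl | ha
  · simpa using hρ
  · nlinarith

theorem stmt_17_general {n : ℕ}
    (G : EuclideanSpace ℝ (Fin n) × ℝ → EuclideanSpace ℝ (Fin n))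
    (hG : Differentiable ℝ G)
    (μ ρ : ℝ) (hμ : 0 < μ)
    (hmono : ∀ t : ℝ, ∀ x y : EuclideanSpace ℝ (Fin n),
      ⟪G (x, t) - G (y, t), x - y⟫ ≥ μ * ‖x - y‖ ^ 2)
    (hpartial : ∀ x : EuclideanSpace ℝ (Fin n), ∀ t : ℝ,
      ‖fderiv ℝ G (x, t) (0, 1)‖ ≤ ρ)
    (xs : ℝ → EuclideanSpace ℝ (Fin n)) (hxs : Differentiable ℝ xs)
    (hzero : ∀ t : ℝ, G (xs t, t) = 0) :
    ∀ t : ℝ, ‖deriv xs t‖ ≤ ρ / μ := by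
  intro t
  set v := deriv xs t
  set A := fderiv ℝ G (xs t, t)
  have hA : HasFDerivAt (fun y => G (y, t)) (A.comp (.inl ℝ _ ℝ)) (xs t) :=
    (hG _).hasFDerivAt.comp _ (hasFDerivAt_prodMk_left _ _)
  have htime : A (v, 0) = -A (0, 1) :=
    fderiv_apply_deriv_eq_neg_of_eventually_eq_zero (hG _) (hxs t) (.of_forall hzero)
  refine le_div_of_mul_sq_le_mul hμ ((norm_nonneg _).trans (hpartial 0 0)) (norm_nonneg v) ?_
  calc μ * ‖v‖ ^ 2 ≤ ⟪A (v, 0), v⟫ :=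
        hA.mul_norm_sq_le_inner_of_strongly_monotone (hmono t) v
    _ = ⟪-A (0, 1), v⟫ := by rw [htime]
    _ ≤ ‖A (0, 1)‖ * ‖v‖ := by rw [← norm_neg (A (0, 1))]; exact real_inner_le_norm _ _
    _ ≤ ρ * ‖v‖ := by gcongr; exact hpartial _ t

theorem stmt_17 {n : ℕ}
    (G : EuclideanSpace ℝ (Fin n) × ℝ → EuclideanSpace ℝ (Fin n))
    (hG : Differentiable ℝ G)
    (μ ρ : ℝ) (hμ : 0 < μ) (hρ : 0 ≤ ρ)
    (hmono : ∀ t : ℝ, ∀ x y : EuclideanSpace ℝ (Fin n),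
      ⟪G (x, t) - G (y, t), x - y⟫ ≥ μ * ‖x - y‖ ^ 2)
    (hpartial : ∀ x : EuclideanSpace ℝ (Fin n), ∀ t : ℝ,
      ‖fderiv ℝ G (x, t) (0, 1)‖ ≤ ρ)
    (xs : ℝ → EuclideanSpace ℝ (Fin n)) (hxs : Differentiable ℝ xs)
    (hzero : ∀ t : ℝ, G (xs t, t) = 0) :
    ∀ t : ℝ, ‖deriv xs t‖ ≤ ρ / μ :=
  stmt_17_general G hG μ ρ hμ hmono hpartial xs hxs hzero
end
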